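/- arXiv:1602.03005 — 3 statements merged into one kernel-verified Lean document; each statement's English description precedes it below -/
import Mathlib

section
/- The definite integral ∫_{-1/2}^{1/2} arcsin((1+2x)/√5) dx equals arctan(2) + 1/2 - √5/2. -/
open Real

/- The substitution `u = (1 + 2x)/√5` maps `[-1/2, 1/2]` onto `[0, 2/√5]`, and
`u arcsin u + √(1 - u²)` is a primitive of `arcsin`. Since `(2/√5)² = 4/5`, the upper endpoint
gives `arcsin (2/√5) = arctan 2` and `√(1 - 4/5) = 1/√5`. -/

/-- Away from `±1` this holds on all of `ℝ`: for `|x| > 1` both `√(1 - x²)` and the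
junk value `1 / √(1 - x²) = 0` of the derivative of `arcsin` vanish. -/
theorem hasDerivAt_mul_arcsin_add_sqrt {x : ℝ} (h₁ : x ≠ -1) (h₂ : x ≠ 1) :
    HasDerivAt (fun y => y * arcsin y + √(1 - y ^ 2)) (arcsin x) x := by
  have hsq : 1 - x ^ 2 ≠ 0 := by
    rw [show 1 - x ^ 2 = (1 - x) * (1 + x) by ring]
    exact mul_ne_zero (sub_ne_zero.2 h₂.symm) fun h => h₁ (by linarith)
  refine (((hasDerivAt_id x).mul (hasDerivAt_arcsin h₁ h₂)).add
    (((hasDerivAt_pow 2 x).const_sub 1).sqrt hsq)).congr_deriv ?_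
  simp only [id, Nat.cast_ofNat]
  ring

theorem integral_arcsin (a b : ℝ) :
    ∫ x in a..b, arcsin x = b * arcsin b + √(1 - b ^ 2) - (a * arcsin a + √(1 - a ^ 2)) := by
  refine MeasureTheory.integral_eq_of_hasDerivAt_off_countable
    (fun x => x * arcsin x + √(1 - x ^ 2)) _ ((Set.countable_singleton 1).insert (-1))
    (by fun_prop) (fun x hx => ?_) (continuous_arcsin.intervalIntegrable a b)
  simp only [Set.mem_sdiff, Set.mem_insert_iff, Set.mem_singleton_iff, not_or] at hx
  exact hasDerivAt_mul_arcsin_add_sqrt hx.2.1 hx.2.2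

theorem integral_I2 :
    ∫ x in (-(1:ℝ)/2)..(1/2), Real.arcsin ((1 + 2*x) / Real.sqrt 5)
      = Real.arctan 2 + 1/2 - Real.sqrt 5 / 2 := by
  have hsq : √5 ^ 2 = 5 := sq_sqrt (by norm_num)
  have hsub : ∀ x : ℝ, (1 + 2 * x) / √5 = 2 / √5 * x + 1 / √5 := fun x => by ring
  have hroot : √(1 - (2 / √5) ^ 2) = 1 / √5 := by
    rw [div_pow, hsq, one_div, ← sqrt_inv]
    norm_num
  have harcsin : arcsin (2 / √5) = arctan 2 := by
    rw [arctan_eq_arcsin]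
    norm_num
  simp_rw [hsub]
  rw [intervalIntegral.integral_comp_mul_add _ (by positivity), integral_arcsin]
  rw [show 2 / √5 * (-1 / 2) + 1 / √5 = 0 by ring, show 2 / √5 * (1 / 2) + 1 / √5 = 2 / √5 by ring,
    hroot, harcsin, smul_eq_mul, inv_div]
  field_simp
  simp
end

section
/- Let α : ℝ → ℝ be defined by α(x) = arcsin((1-2x)/√5) + arcsin((1+2x)/√5) + 2·arctan(2) - π. Then α is monotone increasing on the interval [0, 1/2], and consequently α(x) ≤ 3·arctan(2) - π for every x in [-1/2, 1/2]. -/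
/-! The map `t ↦ arcsin (c - t) + arcsin (c + t)` has derivative
`1 / √(1 - (c + t)²) - 1 / √(1 - (c - t)²)`, which is nonnegative for `c, t ≥ 0` because
`arcsin' = 1 / √(1 - x²)` grows with `x²` and `(c - t)² ≤ (c + t)²`. With `c = 1 / √5` and
`t = 2x / √5` this is `α` up to a constant, so `α` increases on `[0, 1/2]`. Since `α` is even,
its maximum on `[-1/2, 1/2]` is `α (1/2) = arcsin 0 + arcsin (2 / √5) + 2 arctan 2 - π`,
and `arcsin (2 / √5) = arctan 2`. -/

open Real Set

lemma one_div_sqrt_one_sub_sq_le {x y : ℝ} (hxy : x ^ 2 ≤ y ^ 2) (hy : y ^ 2 < 1) :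
    1 / √(1 - x ^ 2) ≤ 1 / √(1 - y ^ 2) :=
  one_div_le_one_div_of_le (sqrt_pos.2 (by linarith)) (sqrt_le_sqrt (by linarith))

lemma monotoneOn_arcsin_sub_add_arcsin_add {c : ℝ} (hc : 0 ≤ c) :
    MonotoneOn (fun t => arcsin (c - t) + arcsin (c + t)) (Icc 0 (1 - c)) := by
  have hderiv : ∀ t ∈ Ioo 0 (1 - c), HasDerivAt (fun t => arcsin (c - t) + arcsin (c + t))
      (1 / √(1 - (c + t) ^ 2) - 1 / √(1 - (c - t) ^ 2)) t := by
    rintro t ⟨ht0, ht1⟩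
    have hsub := (hasDerivAt_arcsin (x := c - t) (by linarith) (by linarith)).comp t
      ((hasDerivAt_id t).const_sub c)
    have hadd := (hasDerivAt_arcsin (x := c + t) (by linarith) (by linarith)).comp t
      ((hasDerivAt_id t).const_add c)
    exact (hsub.add hadd).congr_deriv (by ring)
  refine monotoneOn_of_deriv_nonneg (convex_Icc _ _) ?_ ?_ ?_
  · fun_prop
  · rw [interior_Icc]
    exact fun t ht => (hderiv t ht).differentiableAt.differentiableWithinAt
  · rw [interior_Icc]
    rintro t ht
    rw [(hderiv t ht).deriv, sub_nonneg]
    obtain ⟨ht0, ht1⟩ := ht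
    exact one_div_sqrt_one_sub_sq_le (by nlinarith) (by nlinarith)

lemma arctan_two_eq_arcsin : arctan 2 = arcsin (2 / √5) := by
  rw [arctan_eq_arcsin]
  norm_num

theorem alpha_monotone_and_bound (α : ℝ → ℝ)
    (hα : ∀ x, α x = Real.arcsin ((1 - 2*x) / Real.sqrt 5) + Real.arcsin ((1 + 2*x) / Real.sqrt 5)
        + 2 * Real.arctan 2 - Real.pi) :
    MonotoneOn α (Set.Icc (0:ℝ) (1/2)) ∧
      ∀ x ∈ Set.Icc (-(1:ℝ)/2) (1/2), α x ≤ 3 * Real.arctan 2 - Real.pi := by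
  have hsqrt5 : 2 < √5 := (lt_sqrt zero_le_two).2 (by norm_num)
  have hα' : α = fun x => arcsin (1 / √5 - 2 * x / √5) + arcsin (1 / √5 + 2 * x / √5)
      + (2 * arctan 2 - π) := by
    ext x
    rw [hα, sub_div, add_div]
    ring
  have hmaps : MapsTo (fun x => 2 * x / √5) (Icc 0 (1 / 2)) (Icc 0 (1 - 1 / √5)) := by
    rintro x ⟨hx0, hx1⟩
    refine ⟨by positivity, ?_⟩
    rw [le_sub_iff_add_le, ← add_div, div_le_one (by positivity)]
    linarith
  have mono : MonotoneOn α (Icc 0 (1 / 2)) := by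
    rw [hα']
    exact ((monotoneOn_arcsin_sub_add_arcsin_add (by positivity)).comp
      (fun x _ y _ hxy => by gcongr) hmaps).add_const _
  refine ⟨mono, fun x hx => ?_⟩
  have heven : α x = α |x| := by
    rcases abs_choice x with h | h <;> rw [h]
    rw [hα, hα]
    ring_nf
  have hval : α (1 / 2) = 3 * arctan 2 - π := by
    rw [hα, arctan_two_eq_arcsin]
    norm_num
    ring
  have habs : |x| ≤ 1 / 2 := abs_le.2 ⟨by linarith [hx.1], hx.2⟩
  rw [heven, ← hval]
  exact mono ⟨abs_nonneg x, habs⟩ (by norm_num) habs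
end

section
/- Let α : ℝ → ℝ be defined by α(x) = arcsin((1-2x)/√5) + arcsin((1+2x)/√5) + 2·arctan(2) - π, and let Φ = (1 + √5)/2. Then (1/π)·∫_{-1/2}^{1/2} α(x) dx = (2/π)·(2·arctan(1/3) - 1/Φ). -/
/-!
Reflecting `x ↦ -x` shows that the two `arcsin` terms of `α` have the same integral, and the
substitution `t = (1 + 2x)/√5` turns that integral into `∫ t in 0..2/√5, arcsin t`, evaluated with
the primitive `t arcsin t + √(1 - t²)`. The constants collapse because `arcsin (2/√5) = arctan 2`,
`arctan 2 = π/4 + arctan (1/3)` and `1/Φ = (√5 - 1)/2`.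
-/

open Real Set intervalIntegral

noncomputable def arcsinPrimitive (t : ℝ) : ℝ := t * arcsin t + √(1 - t ^ 2)

theorem continuous_arcsinPrimitive : Continuous arcsinPrimitive := by
  unfold arcsinPrimitive; fun_prop

theorem hasDerivAt_arcsinPrimitive {t : ℝ} (ht : t ∈ Ioo (-1) 1) :
    HasDerivAt arcsinPrimitive (arcsin t) t := by
  have hpos : 0 < 1 - t ^ 2 := by nlinarith [ht.1, ht.2]
  have hsqrt : HasDerivAt (fun t : ℝ => √(1 - t ^ 2)) (-(2 * t) / (2 * √(1 - t ^ 2))) t := by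
    simpa using ((hasDerivAt_pow 2 t).const_sub 1).sqrt hpos.ne'
  refine (((hasDerivAt_id' t).mul (hasDerivAt_arcsin ht.1.ne' ht.2.ne)).add hsqrt).congr_deriv ?_
  field_simp
  ring

theorem integral_arcsin_s14 {a b : ℝ} (ha : a ∈ Icc (-1) 1) (hb : b ∈ Icc (-1) 1) :
    ∫ t in a..b, arcsin t = arcsinPrimitive b - arcsinPrimitive a := by
  refine integral_eq_sub_of_hasDeriv_right continuous_arcsinPrimitive.continuousOn
    (fun t ht => (hasDerivAt_arcsinPrimitive ?_).hasDerivWithinAt)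
    (continuous_arcsin.intervalIntegrable _ _)
  rcases ht with ⟨h₁, h₂⟩
  constructor
  · exact lt_of_le_of_lt (le_min ha.1 hb.1) h₁
  · exact lt_of_lt_of_le h₂ (max_le ha.2 hb.2)

theorem arcsinPrimitive_zero : arcsinPrimitive 0 = 1 := by
  simp [arcsinPrimitive]

theorem arcsin_two_div_sqrt_five : arcsin (2 / √5) = arctan 2 := by
  rw [arctan_eq_arcsin]; norm_num

theorem arctan_two : arctan 2 = π / 4 + arctan (1 / 3) := by
  rw [← arctan_one, arctan_add] <;> norm_num

theorem arcsinPrimitive_two_div_sqrt_five :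
    arcsinPrimitive (2 / √5) = (2 * arctan 2 + 1) / √5 := by
  have h5 : √5 ^ 2 = 5 := sq_sqrt (by norm_num)
  have hroot : √(1 - (2 / √5) ^ 2) = 1 / √5 := by
    rw [div_pow, h5, show (1 : ℝ) - 2 ^ 2 / 5 = 1 / 5 by norm_num, sqrt_div' _ (by norm_num), sqrt_one]
  rw [arcsinPrimitive, hroot, arcsin_two_div_sqrt_five]
  ring

theorem integral_arcsin_mul_add {a b c d : ℝ} (hc : c ≠ 0) (ha : c * a + d ∈ Icc (-1) 1)
    (hb : c * b + d ∈ Icc (-1) 1) :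
    ∫ x in a..b, arcsin (c * x + d) =
      (arcsinPrimitive (c * b + d) - arcsinPrimitive (c * a + d)) / c := by
  rw [integral_comp_mul_add _ hc, integral_arcsin_s14 ha hb, smul_eq_mul, inv_mul_eq_div]

theorem integral_arcsin_one_add_two_mul_div_sqrt_five :
    ∫ x in (-1 / 2 : ℝ)..1 / 2, arcsin ((1 + 2 * x) / √5) = (2 * arctan 2 + 1 - √5) / 2 := by
  have h5 : 0 < √5 := by positivity
  have h25 : 2 / √5 ≤ 1 := by
    rw [div_le_one h5, show (2 : ℝ) = √4 by norm_num]; gcongr; norm_num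
  have hlo : 2 / √5 * (-1 / 2) + 1 / √5 = 0 := by ring
  have hhi : 2 / √5 * (1 / 2) + 1 / √5 = 2 / √5 := by ring
  have key := integral_arcsin_mul_add (a := -1 / 2) (b := 1 / 2) (c := 2 / √5) (d := 1 / √5)
    (by positivity) (by rw [hlo]; norm_num) (by rw [hhi]; exact ⟨by linarith [div_pos two_pos h5], h25⟩)
  rw [hlo, hhi, arcsinPrimitive_two_div_sqrt_five, arcsinPrimitive_zero] at key
  calc ∫ x in (-1 / 2 : ℝ)..1 / 2, arcsin ((1 + 2 * x) / √5)
      = ∫ x in (-1 / 2 : ℝ)..1 / 2, arcsin (2 / √5 * x + 1 / √5) := by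
        congr 1; funext x; congr 1; ring
    _ = (2 * arctan 2 + 1 - √5) / 2 := by
        rw [key]; field_simp

theorem main_result (α : ℝ → ℝ)
    (hα : ∀ x, α x = Real.arcsin ((1 - 2*x) / Real.sqrt 5) + Real.arcsin ((1 + 2*x) / Real.sqrt 5)
        + 2 * Real.arctan 2 - Real.pi)
    (Φ : ℝ) (hΦ : Φ = (1 + Real.sqrt 5) / 2) :
    (1 / Real.pi) * ∫ x in (-(1:ℝ)/2)..(1/2), α x
      = (2 / Real.pi) * (2 * Real.arctan (1/3) - 1 / Φ) := by
  have hrefl : ∫ x in (-(1:ℝ)/2)..(1/2), arcsin ((1 - 2 * x) / √5)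
      = ∫ x in (-(1:ℝ)/2)..(1/2), arcsin ((1 + 2 * x) / √5) := by
    have := integral_comp_neg (a := -(1 / 2 : ℝ)) (b := 1 / 2) fun x => arcsin ((1 + 2 * x) / √5)
    simp only [neg_neg, mul_neg, ← sub_eq_add_neg] at this
    rwa [neg_div]
  have h5 : √5 ^ 2 = 5 := sq_sqrt (by norm_num)
  simp_rw [hα]
  rw [integral_sub, integral_add, integral_add, hrefl, integral_arcsin_one_add_two_mul_div_sqrt_five,
    arctan_two, hΦ]
  · simp only [integral_const, smul_eq_mul]
    field_simp
    linear_combination -8 * h5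
  all_goals exact Continuous.intervalIntegrable (by fun_prop) _ _
end
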